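/- arXiv:1910.06228 — 6 statements merged into one kernel-verified Lean document; each statement's English description precedes it below -/
import Mathlib

section
/- Consider the 2×2 game with payoffs u(L,L)=(1,1), u(L,R)=(1,0), u(R,L)=(0,1), u(R,R)=(1,1). The uniform product distribution assigning probability 1/4 to each joint plan is not a CCE of this game, even though the strategies x_1^t = x_2^t alternating deterministically between L and R (playing L at even t, R at odd t) have zero cumulative external regret for all T. -/
open Finset

/-- In the 2×2 game with payoffs u(L,L)=(1,1), u(L,R)=(1,0),
u(R,L)=(0,1), u(R,R)=(1,1) (here `false` is L and `true` is R), the uniform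
product distribution (probability 1/4 on each joint plan) is not a CCE, even
though the deterministic alternating strategies (both players play L at even
rounds and R at odd rounds) have zero cumulative external regret for all `T`. -/
theorem stmt4
    (u₁ u₂ : Bool → Bool → ℝ)
    (hu₁ : ∀ a b, u₁ a b = if a = false then 1 else if b = true then 1 else 0)
    (hu₂ : ∀ a b, u₂ a b = u₁ b a)
    -- the alternating play: L (= false) at even t, R (= true) at odd t
    (s : ℕ → Bool) (hs : ∀ t, s t = decide (t % 2 = 1)) :
    -- the uniform distribution 1/4 on each joint plan is not a CCE
    (¬ ((∀ a' : Bool, ∑ σ : Bool × Bool, (1 / 4 : ℝ) * (u₁ a' σ.2 - u₁ σ.1 σ.2) ≤ 0) ∧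
        (∀ b' : Bool, ∑ σ : Bool × Bool, (1 / 4 : ℝ) * (u₂ σ.1 b' - u₂ σ.1 σ.2) ≤ 0)))
    ∧
    -- both players have zero cumulative external regret along the alternating play
    (∀ T : ℕ,
      (Finset.univ.sup' Finset.univ_nonempty
        (fun a' : Bool => ∑ t ∈ Finset.range T, (u₁ a' (s t) - u₁ (s t) (s t))) = 0 ∧
       Finset.univ.sup' Finset.univ_nonempty
        (fun b' : Bool => ∑ t ∈ Finset.range T, (u₂ (s t) b' - u₂ (s t) (s t))) = 0)) := by
  have hdiag : ∀ b : Bool, u₁ b b = 1 := by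
    intro b; cases b <;> simp [hu₁]
  have hfalse : ∀ b : Bool, u₁ false b = 1 := by
    intro b; simp [hu₁]
  constructor
  · rintro ⟨h1, -⟩
    have := h1 false
    rw [Fintype.sum_prod_type] at this
    simp only [Fintype.sum_bool, hu₁] at this
    norm_num at this
  · intro T
    constructor
    · apply le_antisymm
      · apply Finset.sup'_le
        intro a' _
        cases a'
        · apply le_of_eq
          apply Finset.sum_eq_zero
          intro t _
          rw [hfalse, hdiag]; ring
        · apply Finset.sum_nonpos
          intro t _
          rw [hdiag, hu₁]
          cases h : s t <;> simp
      · refine le_trans ?_ (Finset.le_sup' _ (Finset.mem_univ false))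
        apply le_of_eq
        symm
        apply Finset.sum_eq_zero
        intro t _
        rw [hfalse, hdiag]; ring
    · apply le_antisymm
      · apply Finset.sup'_le
        intro b' _
        cases b'
        · apply le_of_eq
          apply Finset.sum_eq_zero
          intro t _
          rw [hu₂, hu₂, hfalse, hdiag]; ring
        · apply Finset.sum_nonpos
          intro t _
          rw [hu₂, hu₂, hdiag, hu₁]
          cases h : s t <;> simp
      · refine le_trans ?_ (Finset.le_sup' _ (Finset.mem_univ false))
        apply le_of_eq
        symm
        apply Finset.sum_eq_zero
        intro t _
        rw [hu₂, hu₂, hfalse, hdiag]; ring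
end

section
/- Let Z be a finite set and let a 'realization vector' be a function ρ : Z → ℝ≥0. Suppose a finite family of plans σ^1,…,σ^k with associated indicator realization vectors ρ^{σ^j} ∈ {0,1}^Z and weights w_1,…,w_k > 0 satisfy ρ = ∑_{j=1}^k w_j ρ^{σ^j}, where at each step j the weight w_j equals the minimum of the residual ω^{j-1} over the support of ρ^{σ^j} (ω^0 = ρ, ω^j = ω^{j-1} − w_j ρ^{σ^j}), each w_j > 0, and ω^k = 0. Then the weights sum to the common value ∑_j w_j, all distinct plans appear at most once, and k ≤ |Z|. -/
/-!
At step `j` the weight is the minimum of the residual over the selected support, so the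
coordinate `z_j` attaining it is zeroed, while the residual stays positive on the support
selected at every step (the weights are positive). A zeroed coordinate is therefore never
selected again and stays zero, so `z_i ∉ Sup j` for `i < j`, whereas `z_j ∈ Sup j`. This
triangular pattern forces both `j ↦ z_j` and `j ↦ Sup j` to be injective, and the former
gives `k ≤ |Z|`.
-/

open Finset

section Triangular

variable {ι α : Type*} [LinearOrder ι] {f : ι → α} {S : ι → Finset α}

theorem Function.Injective.of_mem_of_notMem_of_lt (hmem : ∀ j, f j ∈ S j)
    (hnot : ∀ i j, i < j → f i ∉ S j) : Function.Injective f :=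
  Function.Injective.of_lt_imp_ne fun i j hij heq => hnot i j hij (heq ▸ hmem j)

theorem Function.Injective.of_mem_of_notMem_of_lt_sets (hmem : ∀ j, f j ∈ S j)
    (hnot : ∀ i j, i < j → f i ∉ S j) : Function.Injective S :=
  Function.Injective.of_lt_imp_ne fun i j hij heq => hnot i j hij (heq ▸ hmem i)

end Triangular

namespace GreedyDecomposition

variable {Z : Type*} {k : ℕ} {Sup : Fin k → Finset Z}
  {hne : ∀ j, (Sup j).Nonempty} {w : Fin k → ℝ} {ω : ℕ → Z → ℝ}

theorem residual_pos_of_mem (hw : ∀ j : Fin k, w j = (Sup j).inf' (hne j) (ω j))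
    (hwpos : ∀ j, 0 < w j) {j : Fin k} {z : Z} (hz : z ∈ Sup j) : 0 < ω j z :=
  (hwpos j).trans_le ((hw j).trans_le (inf'_le _ hz))

theorem residual_succ_eq_zero_of_eq_zero [DecidableEq Z]
    (hupd : ∀ (j : Fin k) (z : Z), ω (j + 1) z = ω j z - w j * (if z ∈ Sup j then 1 else 0))
    (hw : ∀ j : Fin k, w j = (Sup j).inf' (hne j) (ω j)) (hwpos : ∀ j, 0 < w j)
    (j : Fin k) {z : Z} (hzero : ω j z = 0) : ω (j + 1) z = 0 := by
  have hz : z ∉ Sup j := fun hz => (residual_pos_of_mem hw hwpos hz).ne' hzero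
  rw [hupd, if_neg hz, mul_zero, sub_zero, hzero]

theorem residual_eq_zero_of_le [DecidableEq Z]
    (hupd : ∀ (j : Fin k) (z : Z), ω (j + 1) z = ω j z - w j * (if z ∈ Sup j then 1 else 0))
    (hw : ∀ j : Fin k, w j = (Sup j).inf' (hne j) (ω j)) (hwpos : ∀ j, 0 < w j)
    {i j : ℕ} (hij : i ≤ j) (hjk : j ≤ k) {z : Z} (hzero : ω i z = 0) : ω j z = 0 := by
  induction j, hij using Nat.le_induction with
  | base => exact hzero
  | succ n _ ih => exact residual_succ_eq_zero_of_eq_zero hupd hw hwpos ⟨n, hjk⟩ (ih (by omega))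

theorem exists_mem_residual_succ_eq_zero [DecidableEq Z]
    (hupd : ∀ (j : Fin k) (z : Z), ω (j + 1) z = ω j z - w j * (if z ∈ Sup j then 1 else 0))
    (hw : ∀ j : Fin k, w j = (Sup j).inf' (hne j) (ω j)) (j : Fin k) :
    ∃ z ∈ Sup j, ω (j + 1) z = 0 := by
  obtain ⟨z, hz, hmin⟩ := (Sup j).exists_mem_eq_inf' (hne j) (ω j)
  refine ⟨z, hz, ?_⟩
  rw [hupd, if_pos hz, mul_one, hw j, hmin, sub_self]

end GreedyDecomposition

open GreedyDecomposition in
theorem stmt7_general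
    {Z : Type*} [Fintype Z] [DecidableEq Z]
    (k : ℕ)
    (Sup : Fin k → Finset Z) (hne : ∀ j, (Sup j).Nonempty)
    (w : Fin k → ℝ)
    (ω : ℕ → Z → ℝ)
    (hupd : ∀ (j : Fin k) (z : Z),
      ω (j + 1) z = ω j z - w j * (if z ∈ Sup j then 1 else 0))
    (hw : ∀ j : Fin k, w j = (Sup j).inf' (hne j) (ω j))
    (hwpos : ∀ j, 0 < w j) :
    Function.Injective Sup ∧ k ≤ Fintype.card Z := by
  choose zeroed hmem hzero using exists_mem_residual_succ_eq_zero hupd hw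
  have hnot : ∀ i j, i < j → zeroed i ∉ Sup j := fun i j hij hz =>
    (residual_pos_of_mem hw hwpos hz).ne'
      (residual_eq_zero_of_le hupd hw hwpos hij j.is_lt.le (hzero i))
  refine ⟨.of_mem_of_notMem_of_lt_sets hmem hnot, ?_⟩
  simpa using Fintype.card_le_of_injective zeroed (.of_mem_of_notMem_of_lt hmem hnot)

/-- Abstract form of the normal-form strategy reconstruction
(Algorithm 2). A realization vector `ρ` is decomposed as a positive combination of
indicator realization vectors of plans (identified with their supports
`Sup j ⊆ Z`), where each weight `w j` is the minimum of the current residual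
`ω j` over the support of the `j`-th plan, every weight is positive, and the final
residual is zero. Then distinct steps select distinct plans (the supports are
injective) and the number of steps is at most `|Z|`. -/
theorem stmt7
    {Z : Type*} [Fintype Z] [DecidableEq Z]
    (k : ℕ) (ρ : Z → ℝ) (hρ : ∀ z, 0 ≤ ρ z)
    (Sup : Fin k → Finset Z) (hne : ∀ j, (Sup j).Nonempty)
    (w : Fin k → ℝ)
    (ω : ℕ → Z → ℝ)
    (h0 : ω 0 = ρ)
    (hupd : ∀ (j : Fin k) (z : Z),
      ω (j + 1) z = ω j z - w j * (if z ∈ Sup j then 1 else 0))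
    (hw : ∀ j : Fin k, w j = (Sup j).inf' (hne j) (ω j))
    (hwpos : ∀ j, 0 < w j)
    (hfin : ∀ z, ω k z = 0)
    (hdecomp : ∀ z, ρ z = ∑ j, w j * (if z ∈ Sup j then 1 else 0)) :
    Function.Injective Sup ∧ k ≤ Fintype.card Z :=
  stmt7_general k Sup hne w ω hupd hw hwpos
end

section
/- Suppose a player plays distributions p^1,…,p^T over a finite action set A, drawn by the regret-matching rule (probability of a proportional to positive cumulative regret R^{T,+}(a), or uniform if all positive regrets are zero), against arbitrary bounded utility vectors u^t : A → [0, Δ]. Then the cumulative regret satisfies max_{a∈A} ∑_{t=1}^T (u^t(a) − ⟨p^t, u^t⟩) ≤ Δ√(|A|·T). -/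
open Finset

/-- Regret matching over a finite action set `A`, against arbitrary
utility vectors with values in `[0, Δ]`, has cumulative external regret bounded by
`Δ √(|A| T)`. Here `R T a` is the cumulative regret of action `a` after the first
`T` rounds and `p t` is the regret-matching distribution (proportional to positive
regrets, uniform when all positive regrets vanish). -/
theorem stmt8
    {A : Type*} [Fintype A] [Nonempty A]
    (Δ : ℝ) (u : ℕ → A → ℝ) (hu : ∀ t a, 0 ≤ u t a ∧ u t a ≤ Δ)
    (p : ℕ → A → ℝ) (R : ℕ → A → ℝ)
    (hR : ∀ T a, R T a = ∑ t ∈ Finset.range T, (u t a - ∑ a', p t a' * u t a'))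
    (hp : ∀ t a, p t a =
      if 0 < ∑ a', max (R t a') 0
      then max (R t a) 0 / ∑ a', max (R t a') 0
      else 1 / (Fintype.card A : ℝ)) :
    ∀ (T : ℕ) (a : A), R T a ≤ Δ * Real.sqrt ((Fintype.card A : ℝ) * T) := by
  classical
  have hΔ : 0 ≤ Δ := by
    obtain ⟨a0⟩ := ‹Nonempty A›
    exact le_trans (hu 0 a0).1 (hu 0 a0).2
  have hnpos : (0:ℝ) < (Fintype.card A : ℝ) := by
    exact_mod_cast Fintype.card_pos
  set C : ℕ → ℝ := fun t => ∑ a', p t a' * u t a' with hCdef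
  have hCt : ∀ t, (∑ a' : A, p t a' * u t a') = C t := fun t => rfl
  -- p is a probability distribution
  have hpnn : ∀ t a', 0 ≤ p t a' := by
    intro t a'
    rw [hp]
    split_ifs with h
    · exact div_nonneg (le_max_right _ _) h.le
    · positivity
  have hpsum : ∀ t, ∑ a', p t a' = 1 := by
    intro t
    by_cases h : 0 < ∑ a', max (R t a') 0
    · rw [Finset.sum_congr rfl (fun a' _ => by rw [hp t a', if_pos h])]
      rw [← Finset.sum_div]
      exact div_self (ne_of_gt h)
    · rw [Finset.sum_congr rfl (fun a' _ => by rw [hp t a', if_neg h])]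
      rw [Finset.sum_const, Finset.card_univ, nsmul_eq_mul]
      field_simp
  have hC0 : ∀ t, 0 ≤ C t := by
    intro t
    exact Finset.sum_nonneg fun a' _ => mul_nonneg (hpnn t a') (hu t a').1
  have hCΔ : ∀ t, C t ≤ Δ := by
    intro t
    calc C t ≤ ∑ a', p t a' * Δ :=
          Finset.sum_le_sum fun a' _ =>
            mul_le_mul_of_nonneg_left (hu t a').2 (hpnn t a')
      _ = Δ := by rw [← Finset.sum_mul, hpsum t, one_mul]
  have hrsq : ∀ t a', (u t a' - C t)^2 ≤ Δ^2 := by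
    intro t a'
    apply sq_le_sq'
    · nlinarith [(hu t a').1, hCΔ t]
    · nlinarith [(hu t a').2, hC0 t]
  -- Blackwell condition
  have hbw : ∀ t, ∑ a', max (R t a') 0 * (u t a' - C t) = 0 := by
    intro t
    by_cases h : 0 < ∑ a', max (R t a') 0
    · have hmax : ∀ a', max (R t a') 0 = (∑ a'', max (R t a'') 0) * p t a' := by
        intro a'
        rw [hp t a', if_pos h]
        field_simp
      calc ∑ a', max (R t a') 0 * (u t a' - C t)
          = (∑ a'', max (R t a'') 0) *
              ∑ a', (p t a' * u t a' - p t a' * C t) := by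
            rw [Finset.mul_sum]
            exact Finset.sum_congr rfl fun a' _ => by rw [hmax a']; ring
        _ = 0 := by
            rw [Finset.sum_sub_distrib, ← Finset.sum_mul, hpsum t, hCt]
            ring
    · push_neg at h
      have h0 : ∑ a', max (R t a') 0 = 0 :=
        le_antisymm h (Finset.sum_nonneg fun _ _ => le_max_right _ _)
      have hz := (Finset.sum_eq_zero_iff_of_nonneg
        (fun a' _ => le_max_right (R t a') 0)).1 h0
      exact Finset.sum_eq_zero fun a' ha' => by rw [hz a' ha', zero_mul]
  -- potential bound by induction
  have key : ∀ T : ℕ, ∑ a', (max (R T a') 0)^2 ≤ T * ((Fintype.card A : ℝ) * Δ^2) := by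
    intro T
    induction T with
    | zero => simp [hR]
    | succ T ih =>
      have hRsucc : ∀ a', R (T+1) a' = R T a' + (u T a' - C T) := by
        intro a'
        rw [hR, hR, Finset.sum_range_succ, hCt]
      have hstep : ∀ a', (max (R (T+1) a') 0)^2 ≤
          (max (R T a') 0)^2 + 2 * (max (R T a') 0 * (u T a' - C T)) + Δ^2 := by
        intro a'
        rw [hRsucc a']
        set x := R T a'
        set r := u T a' - C T
        have h1 : (max (x + r) 0)^2 ≤ (max x 0 + r)^2 := by
          rcases le_or_gt (x + r) 0 with hle | hlt
          · rw [max_eq_right hle]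
            simpa using sq_nonneg (max x 0 + r)
          · rw [max_eq_left hlt.le]
            have hle2 : x + r ≤ max x 0 + r := by
              have := le_max_left x 0; linarith
            nlinarith
        have h2 : (max x 0 + r)^2 = (max x 0)^2 + 2 * (max x 0 * r) + r^2 := by ring
        have h3 : r^2 ≤ Δ^2 := hrsq T a'
        linarith
      calc ∑ a', (max (R (T+1) a') 0)^2
          ≤ ∑ a', ((max (R T a') 0)^2 + 2 * (max (R T a') 0 * (u T a' - C T)) + Δ^2) :=
            Finset.sum_le_sum fun a' _ => hstep a'
        _ = (∑ a', (max (R T a') 0)^2) + 2 * (∑ a', max (R T a') 0 * (u T a' - C T))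
              + (Fintype.card A : ℝ) * Δ^2 := by
            rw [Finset.sum_add_distrib, Finset.sum_add_distrib, ← Finset.mul_sum,
              Finset.sum_const, Finset.card_univ, nsmul_eq_mul]
        _ ≤ T * ((Fintype.card A : ℝ) * Δ^2) + 2 * 0 + (Fintype.card A : ℝ) * Δ^2 := by
            rw [hbw T]; linarith
        _ = (T+1 : ℕ) * ((Fintype.card A : ℝ) * Δ^2) := by
            push_cast; ring
  intro T a
  have h1 : (max (R T a) 0)^2 ≤ T * ((Fintype.card A : ℝ) * Δ^2) := by
    refine le_trans ?_ (key T)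
    exact Finset.single_le_sum (f := fun a' => (max (R T a') 0)^2) (fun a' _ => sq_nonneg _) (Finset.mem_univ a)
  have h2 : R T a ≤ max (R T a) 0 := le_max_left _ _
  have h3 : max (R T a) 0 ≤ Real.sqrt (T * ((Fintype.card A : ℝ) * Δ^2)) := by
    have := Real.sqrt_le_sqrt h1
    rwa [Real.sqrt_sq (le_max_right (R T a) 0)] at this
  have h4 : Real.sqrt (T * ((Fintype.card A : ℝ) * Δ^2))
      = Δ * Real.sqrt ((Fintype.card A : ℝ) * T) := by
    rw [show (T : ℝ) * ((Fintype.card A : ℝ) * Δ^2)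
        = Δ^2 * ((Fintype.card A : ℝ) * T) by ring,
      Real.sqrt_mul (sq_nonneg Δ), Real.sqrt_sq hΔ]
  linarith [h3, h4.le, h4.ge]
end

section
/- Regret matching satisfies the Blackwell condition: if p^{t} is the regret-matching distribution computed from cumulative regrets R^{t-1}, then for any utility vector u^t, ∑_{a∈A} R^{t-1,+}(a)·(u^t(a) − ⟨p^t, u^t⟩) = 0. Consequently, the sum of squared positive regrets satisfies ∑_a (R^{T,+}(a))² ≤ ∑_a (R^{T-1,+}(a))² + ∑_a (u^T(a) − ⟨p^T,u^T⟩)² . -/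
open Finset

lemma key_sq (x y : ℝ) : (max (x + y) 0) ^ 2 ≤ (max x 0) ^ 2 + 2 * (max x 0) * y + y ^ 2 := by
  rcases le_total (x + y) 0 with h | h
  · rw [max_eq_right h]
    nlinarith [sq_nonneg (max x 0 + y)]
  · rw [max_eq_left h]
    nlinarith [le_max_right x 0, le_max_left x 0]

/-- Regret matching satisfies the Blackwell condition: the
positive-regret-weighted sum of instantaneous regrets is zero, and consequently
the sum of squared positive regrets grows by at most the sum of the squared
instantaneous regrets at each step. Here `R t` is the cumulative regret after the
first `t` rounds and `p t` (used at round `t`) is computed from `R t`. -/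
theorem stmt9
    {A : Type*} [Fintype A] [Nonempty A]
    (u : ℕ → A → ℝ)
    (p : ℕ → A → ℝ) (R : ℕ → A → ℝ)
    (hR : ∀ T a, R T a = ∑ t ∈ Finset.range T, (u t a - ∑ a', p t a' * u t a'))
    (hp : ∀ t a, p t a =
      if 0 < ∑ a', max (R t a') 0
      then max (R t a) 0 / ∑ a', max (R t a') 0
      else 1 / (Fintype.card A : ℝ)) :
    ∀ t : ℕ,
      (∑ a, max (R t a) 0 * (u t a - ∑ a', p t a' * u t a') = 0) ∧
      (∑ a, (max (R (t + 1) a) 0) ^ 2 ≤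
        ∑ a, (max (R t a) 0) ^ 2 + ∑ a, (u t a - ∑ a', p t a' * u t a') ^ 2) := by
  intro t
  have hv : ∀ a, R (t + 1) a = R t a + (u t a - ∑ a', p t a' * u t a') := by
    intro a
    rw [hR, hR, Finset.sum_range_succ]
  have hbl : ∑ a, max (R t a) 0 * (u t a - ∑ a', p t a' * u t a') = 0 := by
    by_cases h : 0 < ∑ a', max (R t a') 0
    · have hS : (∑ a', max (R t a') 0) ≠ 0 := ne_of_gt h
      have hpa : ∀ a, p t a = max (R t a) 0 / ∑ a', max (R t a') 0 := by
        intro a; rw [hp]; simp [h]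
      have hc : (∑ a', p t a' * u t a')
          = (∑ a', max (R t a') 0 * u t a') / (∑ a', max (R t a') 0) := by
        rw [Finset.sum_div]
        exact Finset.sum_congr rfl fun a _ => by rw [hpa, div_mul_eq_mul_div]
      rw [hc]
      have expand : ∑ a, max (R t a) 0 *
          (u t a - (∑ a', max (R t a') 0 * u t a') / (∑ a', max (R t a') 0))
          = (∑ a, max (R t a) 0 * u t a)
            - (∑ a, max (R t a) 0) * ((∑ a', max (R t a') 0 * u t a') / (∑ a', max (R t a') 0)) := by
        simp only [mul_sub]
        rw [Finset.sum_sub_distrib, ← Finset.sum_mul]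
      rw [expand, mul_div_assoc', mul_comm, ← mul_div_assoc', div_self hS, mul_one, sub_self]
    · have hz : ∀ a ∈ Finset.univ, max (R t a) 0 = 0 := by
        have hnn : ∀ a ∈ (Finset.univ : Finset A), 0 ≤ max (R t a) 0 :=
          fun a _ => le_max_right _ _
        have hle : (∑ a', max (R t a') 0) = 0 :=
          le_antisymm (not_lt.mp h) (Finset.sum_nonneg hnn)
        exact (Finset.sum_eq_zero_iff_of_nonneg hnn).mp hle
      exact Finset.sum_eq_zero fun a ha => by rw [hz a ha, zero_mul]
  refine ⟨hbl, ?_⟩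
  calc ∑ a, (max (R (t + 1) a) 0) ^ 2
      = ∑ a, (max (R t a + (u t a - ∑ a', p t a' * u t a')) 0) ^ 2 := by
        exact Finset.sum_congr rfl fun a _ => by rw [hv a]
    _ ≤ ∑ a, ((max (R t a) 0) ^ 2
          + 2 * (max (R t a) 0) * (u t a - ∑ a', p t a' * u t a')
          + (u t a - ∑ a', p t a' * u t a') ^ 2) :=
        Finset.sum_le_sum fun a _ => key_sq _ _
    _ = ∑ a, (max (R t a) 0) ^ 2
          + 2 * ∑ a, max (R t a) 0 * (u t a - ∑ a', p t a' * u t a')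
          + ∑ a, (u t a - ∑ a', p t a' * u t a') ^ 2 := by
        rw [Finset.sum_add_distrib, Finset.sum_add_distrib, Finset.mul_sum]
        congr 1
        congr 1
        exact Finset.sum_congr rfl fun a _ => by ring
    _ = ∑ a, (max (R t a) 0) ^ 2 + ∑ a, (u t a - ∑ a', p t a' * u t a') ^ 2 := by
        rw [hbl]; ring
end

section
/- Let T be a finite rooted tree of player-i decision points (infosets), where at each infoset I a finite action set A(I) is available and playing a ∈ A(I) leads to a set C(I,a) of child infosets. For plans σ (choosing one action per infoset) define the value V_I^t(σ) = u_{I}^t(σ(I)) + ∑_{I'∈C(I,σ(I))} V_{I'}^t(σ) for observed immediate utilities u_I^t, and let the cumulative subtree regret be R_{↓I}^T = max_σ ∑_{t=1}^T V_I^t(σ) − ∑_{t=1}^T V_I^t(σ^t), where σ^t is the plan played at time t. Then R_{↓I}^T = max_{a∈A(I)} ( ∑_{t=1}^T û_I^t(a) + ∑_{I'∈C(I,a)} R_{↓I'}^T ) − ∑_{t=1}^T û_I^t(σ^t(I)), where û_I^t(a) = u_I^t(a) + ∑_{I'∈C(I,a)} V_{I'}^t(σ^t). -/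
/-!
A plan assigns actions independently at every infoset, and the subtrees below distinct children
of `I` are disjoint and avoid `I`. So plans that are optimal for the individual children, together
with any action at `I`, can be glued into one plan; since the value of a subtree only depends on the
plan inside it, the best cumulative value at `I` is the best action at `I` plus the best cumulative
values of its children. Subtracting the realized cumulative value, and regrouping the sum over the
children, gives the decomposition of the subtree regret.
-/

open Finset

theorem Fintype.exists_mem_piFinset_eqOn_of_pairwiseDisjoint {ι κ β : Type*} [Fintype ι]
    [DecidableEq ι] {A : ι → Finset β} {s : Finset κ} {D : κ → Finset ι}
    (hD : (s : Set κ).PairwiseDisjoint D) {g : κ → ι → β}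
    (hg : ∀ k ∈ s, g k ∈ Fintype.piFinset A) {σ₀ : ι → β} (hσ₀ : σ₀ ∈ Fintype.piFinset A) :
    ∃ σ ∈ Fintype.piFinset A, ∀ k ∈ s, ∀ i ∈ D k, σ i = g k i := by
  classical
  let σ : ι → β := fun i => if h : ∃ k ∈ s, i ∈ D k then g h.choose i else σ₀ i
  refine ⟨σ, Fintype.mem_piFinset.mpr fun i => ?_, fun k hk i hi => ?_⟩
  · by_cases h : ∃ k ∈ s, i ∈ D k
    · simpa only [σ, dif_pos h] using Fintype.mem_piFinset.mp (hg _ h.choose_spec.1) i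
    · simpa only [σ, dif_neg h] using Fintype.mem_piFinset.mp hσ₀ i
  · have h : ∃ k ∈ s, i ∈ D k := ⟨k, hk, hi⟩
    have hchoose : h.choose = k :=
      hD.elim_finset h.choose_spec.1 hk i h.choose_spec.2 hi
    simp only [σ, dif_pos h, hchoose]

section SubtreeValue

variable {Inf α : Type*} {A : Inf → Finset α}
  {C : Inf → α → Finset Inf} {D : Inf → Finset Inf} {u : ℕ → Inf → α → ℝ}
  {V : ℕ → (Inf → α) → Inf → ℝ} {I : Inf}

theorem sum_range_value_eq (hV : ∀ t σ, V t σ I = u t I (σ I) + ∑ I' ∈ C I (σ I), V t σ I')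
    (σ : Inf → α) (T : ℕ) :
    ∑ t ∈ range T, V t σ I
      = ∑ t ∈ range T, u t I (σ I) + ∑ I' ∈ C I (σ I), ∑ t ∈ range T, V t σ I' := by
  rw [sum_comm (s := C I (σ I)), ← sum_add_distrib]
  exact sum_congr rfl fun t _ => hV t σ

variable [Fintype Inf] [DecidableEq Inf]

theorem sup'_sum_range_value_le (hA : (A I).Nonempty) (hne : (Fintype.piFinset A).Nonempty)
    (hV : ∀ t σ, V t σ I = u t I (σ I) + ∑ I' ∈ C I (σ I), V t σ I') (T : ℕ) :
    (Fintype.piFinset A).sup' hne (fun σ => ∑ t ∈ range T, V t σ I)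
      ≤ (A I).sup' hA (fun a => ∑ t ∈ range T, u t I a
          + ∑ I' ∈ C I a, (Fintype.piFinset A).sup' hne (fun σ => ∑ t ∈ range T, V t σ I')) := by
  refine sup'_le _ _ fun σ hσ => le_sup'_of_le _ (Fintype.mem_piFinset.mp hσ I) ?_
  rw [sum_range_value_eq hV]
  gcongr with I'
  exact le_sup' (fun σ => ∑ t ∈ range T, V t σ I') hσ

theorem le_sup'_sum_range_value (hA : (A I).Nonempty) (hne : (Fintype.piFinset A).Nonempty)
    (hV : ∀ t σ, V t σ I = u t I (σ I) + ∑ I' ∈ C I (σ I), V t σ I')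
    (hloc : ∀ t σ σ' I, (∀ J ∈ D I, σ J = σ' J) → V t σ I = V t σ' I)
    (hroot : ∀ a, ∀ I' ∈ C I a, I ∉ D I')
    (hdisj : ∀ a, (C I a : Set Inf).PairwiseDisjoint D) (T : ℕ) :
    (A I).sup' hA (fun a => ∑ t ∈ range T, u t I a
        + ∑ I' ∈ C I a, (Fintype.piFinset A).sup' hne (fun σ => ∑ t ∈ range T, V t σ I'))
      ≤ (Fintype.piFinset A).sup' hne (fun σ => ∑ t ∈ range T, V t σ I) := by
  refine sup'_le _ _ fun a ha => ?_
  choose g hg hg_eq using fun I' : Inf =>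
    exists_mem_eq_sup' hne (fun σ => ∑ t ∈ range T, V t σ I')
  obtain ⟨σ₁, hσ₁, hσ₁g⟩ := Fintype.exists_mem_piFinset_eqOn_of_pairwiseDisjoint (hdisj a)
    (fun I' _ => hg I') hne.choose_spec
  -- Changing the action at `I` keeps the plan optimal on every child subtree, as none contains `I`.
  set σ := Function.update σ₁ I a
  have hσI : σ I = a := Function.update_self I a σ₁
  have hσ : σ ∈ Fintype.piFinset A := by
    refine Fintype.mem_piFinset.mpr fun J => ?_
    rcases eq_or_ne J I with rfl | hJ
    · rwa [hσI]
    · simpa [σ, hJ] using Fintype.mem_piFinset.mp hσ₁ J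
  have hσ_child : ∀ I' ∈ C I a, ∑ t ∈ range T, V t σ I' = ∑ t ∈ range T, V t (g I') I' := by
    refine fun I' hI' => sum_congr rfl fun t _ => hloc t σ (g I') I' fun J hJ => ?_
    have hJI : J ≠ I := fun h => hroot a I' hI' (h ▸ hJ)
    simp only [σ, Function.update_of_ne hJI, hσ₁g I' hI' J hJ]
  refine le_sup'_of_le _ hσ (le_of_eq ?_)
  rw [sum_range_value_eq hV, hσI]
  refine congrArg _ (sum_congr rfl fun I' hI' => ?_)
  rw [hσ_child I' hI', hg_eq]

end SubtreeValue

theorem stmt10_general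
    {Inf : Type*} [Fintype Inf] [DecidableEq Inf]       -- infosets
    {α : Type*}                                         -- actions
    (A : Inf → Finset α) (hA : ∀ I, (A I).Nonempty)     -- available actions
    (C : Inf → α → Finset Inf)                          -- children infosets
    (D : Inf → Finset Inf)                              -- subtree (descendants incl. itself)
    (hDsub : ∀ I a I', I' ∈ C I a → D I' ⊆ D I \ {I})
    (hDdisj : ∀ I a, ∀ I' ∈ C I a, ∀ I'' ∈ C I a, I' ≠ I'' → Disjoint (D I') (D I''))
    (u : ℕ → Inf → α → ℝ)                               -- immediate utilities
    (V : ℕ → (Inf → α) → Inf → ℝ)                       -- subtree values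
    (hV : ∀ t σ I, V t σ I = u t I (σ I) + ∑ I' ∈ C I (σ I), V t σ I')
    (hloc : ∀ t σ σ' I, (∀ J ∈ D I, σ J = σ' J) → V t σ I = V t σ' I)
    (σp : ℕ → Inf → α)                                  -- played plans
    (hne : (Fintype.piFinset A).Nonempty)               -- the set of feasible plans
    (T : ℕ) (I : Inf) :
    (Fintype.piFinset A).sup' hne (fun σ => ∑ t ∈ Finset.range T, V t σ I)
        - ∑ t ∈ Finset.range T, V t (σp t) I
      =
    (A I).sup' (hA I) (fun a =>
        (∑ t ∈ Finset.range T, (u t I a + ∑ I' ∈ C I a, V t (σp t) I'))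
        + ∑ I' ∈ C I a,
            ((Fintype.piFinset A).sup' hne (fun σ => ∑ t ∈ Finset.range T, V t σ I')
              - ∑ t ∈ Finset.range T, V t (σp t) I'))
      - ∑ t ∈ Finset.range T,
          (u t I (σp t I) + ∑ I' ∈ C I (σp t I), V t (σp t) I') := by
  have hroot : ∀ a, ∀ I' ∈ C I a, I ∉ D I' := fun a I' hI' hI =>
    (mem_sdiff.mp (hDsub I a I' hI' hI)).2 (mem_singleton_self I)
  have hbest := le_antisymm (sup'_sum_range_value_le (hA I) hne (hV · · I) T)
    (le_sup'_sum_range_value (hA I) hne (hV · · I) hloc hroot (hDdisj I) T)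
  rw [← sum_congr rfl fun t _ => hV t (σp t) I, hbest]
  congr 1
  refine sup'_congr (hA I) rfl fun a _ => ?_
  rw [sum_add_distrib, sum_sub_distrib, sum_comm (s := range T) (t := C I a)]
  ring

/-- Regret decomposition lemma (Lemma 1). In a finite rooted tree of
player-`i` infosets (`Inf`, with available actions `A I`, children `C I a`,
disjoint descendant sets `D`, a height function witnessing well-foundedness,
immediate utilities `u`, and values `V` defined recursively and depending only on
the plan restricted to the subtree), the cumulative subtree regret at an infoset
`I` equals the max over actions at `I` of the laminar utility plus the children's
subtree regrets, minus the realized laminar utility. -/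
theorem stmt10
    {Inf : Type*} [Fintype Inf] [DecidableEq Inf]       -- infosets
    {α : Type*} [Fintype α] [DecidableEq α]             -- actions
    (A : Inf → Finset α) (hA : ∀ I, (A I).Nonempty)     -- available actions
    (C : Inf → α → Finset Inf)                          -- children infosets
    (ht : Inf → ℕ) (hht : ∀ I a I', I' ∈ C I a → ht I' < ht I)  -- tree is well-founded
    (D : Inf → Finset Inf)                              -- subtree (descendants incl. itself)
    (hDself : ∀ I, I ∈ D I)
    (hDsub : ∀ I a I', I' ∈ C I a → D I' ⊆ D I \ {I})
    (hDdisj : ∀ I a, ∀ I' ∈ C I a, ∀ I'' ∈ C I a, I' ≠ I'' → Disjoint (D I') (D I''))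
    (u : ℕ → Inf → α → ℝ)                               -- immediate utilities
    (V : ℕ → (Inf → α) → Inf → ℝ)                       -- subtree values
    (hV : ∀ t σ I, V t σ I = u t I (σ I) + ∑ I' ∈ C I (σ I), V t σ I')
    (hloc : ∀ t σ σ' I, (∀ J ∈ D I, σ J = σ' J) → V t σ I = V t σ' I)
    (σp : ℕ → Inf → α) (hσp : ∀ t I, σp t I ∈ A I)      -- played plans
    (hne : (Fintype.piFinset A).Nonempty)               -- the set of feasible plans
    (T : ℕ) (I : Inf) :
    (Fintype.piFinset A).sup' hne (fun σ => ∑ t ∈ Finset.range T, V t σ I)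
        - ∑ t ∈ Finset.range T, V t (σp t) I
      =
    (A I).sup' (hA I) (fun a =>
        (∑ t ∈ Finset.range T, (u t I a + ∑ I' ∈ C I a, V t (σp t) I'))
        + ∑ I' ∈ C I a,
            ((Fintype.piFinset A).sup' hne (fun σ => ∑ t ∈ Finset.range T, V t σ I')
              - ∑ t ∈ Finset.range T, V t (σp t) I'))
      - ∑ t ∈ Finset.range T,
          (u t I (σp t I) + ∑ I' ∈ C I (σp t I), V t (σp t) I') :=
  stmt10_general A hA C D hDsub hDdisj u V hV hloc σp hne T I
end

section
/- Let ω : Z → ℝ≥0 and suppose the reconstruction invariants hold: ω^0 = ρ^{π}, ω^{k} = ω^{k-1} − w_k ρ^{σ^k} with w_k = min_{z: ρ_z^{σ^k}=1} ω_z^{k-1} > 0, and the final residual ω^{k̄} = 0. Then the strategy x assigning probability w_k to σ^k satisfies ∑_k w_k ρ_z^{σ^k} = ρ_z^{π} for every z ∈ Z; in particular if there exists z* with ρ_{z*}^{σ^k} = 1 for all k (a terminal reachable under every plan, e.g. determined by the root action common to all selected plans in a game where the player moves once), then ∑_k w_k = ρ_{z*}^{π}. -/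
open Finset

/-- Telescoping identity of the reconstruction algorithm: starting
from the realization vector `ρπ` of a behavioral strategy, subtracting at each
step `j` the weight `w j` (the minimum residual over the support of plan `j`,
assumed positive) times the 0/1 realization vector `ρσ j` of the selected plan,
and ending with a zero residual, the reconstructed mixed strategy is realization
equivalent to the behavioral strategy: `∑ j, w j * ρσ j z = ρπ z` for every
terminal `z`. In particular, if some terminal `z*` is reachable under every
selected plan, the weights sum to `ρπ z*`. -/
theorem stmt18
    {Z : Type*} [Fintype Z]
    (ρπ : Z → ℝ) (hρπ : ∀ z, 0 ≤ ρπ z)                -- realization vector of π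
    (k : ℕ)
    (ρσ : Fin k → Z → ℝ)                               -- 0/1 plan realization vectors
    (hρσ : ∀ j z, ρσ j z = 0 ∨ ρσ j z = 1)
    (w : Fin k → ℝ) (hwpos : ∀ j, 0 < w j)             -- the weights
    (ω : ℕ → Z → ℝ)                                    -- residuals
    (h0 : ω 0 = ρπ)
    (hupd : ∀ (j : Fin k) (z : Z), ω (j + 1) z = ω j z - w j * ρσ j z)
    -- each weight is the minimum residual over the support of the selected plan
    (hmin : ∀ (j : Fin k) (z : Z), ρσ j z = 1 → w j ≤ ω j z)
    (hmin' : ∀ j : Fin k, ∃ z, ρσ j z = 1 ∧ w j = ω j z)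
    (hfin : ∀ z, ω k z = 0) :
    (∀ z, ∑ j, w j * ρσ j z = ρπ z) ∧
    (∀ zstar : Z, (∀ j, ρσ j zstar = 1) → ∑ j, w j = ρπ zstar) := by
  have key : ∀ n, n ≤ k → ∀ z, ω n z =
      ρπ z - ∑ j ∈ Finset.univ.filter (fun j : Fin k => (j : ℕ) < n), w j * ρσ j z := by
    intro n
    induction n with
    | zero =>
      intro _ z
      simp [h0]
    | succ n ih =>
      intro hn z
      have hnk : n < k := hn
      have hn' : n ≤ k := le_of_lt hnk
      set jn : Fin k := ⟨n, hnk⟩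
      have hstep : ω (n + 1) z = ω n z - w jn * ρσ jn z := hupd jn z
      have hins : Finset.univ.filter (fun j : Fin k => (j : ℕ) < n + 1) =
          insert jn (Finset.univ.filter (fun j : Fin k => (j : ℕ) < n)) := by
        ext j
        simp only [Finset.mem_filter, Finset.mem_insert, Finset.mem_univ, true_and]
        constructor
        · intro hj
          rcases Nat.lt_succ_iff_lt_or_eq.mp hj with h | h
          · exact Or.inr h
          · exact Or.inl (Fin.ext h)
        · intro hj
          rcases hj with rfl | hj
          · exact Nat.lt_succ_self n
          · exact Nat.lt_succ_of_lt hj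
      have hnotmem : jn ∉ Finset.univ.filter (fun j : Fin k => (j : ℕ) < n) := by
        simp [jn]
      rw [hstep, ih hn' z, hins, Finset.sum_insert hnotmem]
      ring
  have main : ∀ z, ∑ j, w j * ρσ j z = ρπ z := by
    intro z
    have h := key k le_rfl z
    have hful : Finset.univ.filter (fun j : Fin k => (j : ℕ) < k) = Finset.univ := by
      ext j; simp [j.isLt]
    rw [hfin z, hful] at h
    linarith
  refine ⟨main, fun zstar hz => ?_⟩
  have := main zstar
  simpa [hz] using this
end
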